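/- An n×n copositive matrix A is irreducible with respect to the cone S₊(n) of positive semi-definite n×n matrices if and only if the linear span of the set of minimal zeros of A equals ℝ^n. -/

import Mathlib

/-
If `A - γ B` is copositive with `B ⪰ 0`, then `uᵀ B u = 0`, hence `B u = 0`, at every zero `u`
of `A`; so `B` vanishes on the span of the minimal zeros. Conversely, if that span is proper,
pick `v ≠ 0` orthogonal to it. By induction over the faces of the nonnegative orthant,
`xᵀ A x ≥ γ (vᵀ x)²` there for some `γ > 0`: on a face containing a minimal zero `w`, subtract
from `x` the largest multiple of `w` that keeps it nonnegative, which lands in a smaller face,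
does not increase the form and does not change `vᵀ x`; on a face without zeros the form is
positive on the compact unit sphere. Then `A - γ v vᵀ` is copositive.
-/

open Matrix

/-- A symmetric matrix `A` is copositive if `xᵀ A x ≥ 0` for all entrywise nonnegative `x`. -/
def Copositive {n : ℕ} (A : Matrix (Fin n) (Fin n) ℝ) : Prop :=
  A.IsSymm ∧ ∀ x : Fin n → ℝ, (∀ i, 0 ≤ x i) → 0 ≤ x ⬝ᵥ A.mulVec x

/-- The support of a vector. -/
def Supp {ι : Type*} (u : ι → ℝ) : Set ι := {i | u i ≠ 0}

/-- A zero of a copositive matrix: a nonzero nonnegative vector `u` with `uᵀ A u = 0`. -/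
def IsZeroOf {n : ℕ} (A : Matrix (Fin n) (Fin n) ℝ) (u : Fin n → ℝ) : Prop :=
  u ≠ 0 ∧ (∀ i, 0 ≤ u i) ∧ u ⬝ᵥ A.mulVec u = 0

/-- A minimal zero: a zero such that no zero has support strictly contained in its support. -/
def IsMinimalZeroOf {n : ℕ} (A : Matrix (Fin n) (Fin n) ℝ) (u : Fin n → ℝ) : Prop :=
  IsZeroOf A u ∧ ¬ ∃ v, IsZeroOf A v ∧ Supp v ⊂ Supp u

/-- The principal submatrix of `A` with rows and columns in `I`. -/
def subMat {n : ℕ} (A : Matrix (Fin n) (Fin n) ℝ) (I : Finset (Fin n)) :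
    Matrix {i // i ∈ I} {i // i ∈ I} ℝ :=
  A.submatrix Subtype.val Subtype.val

/-- The subvector of `u` with indices in `I`. -/
def subVec {n : ℕ} (u : Fin n → ℝ) (I : Finset (Fin n)) : {i // i ∈ I} → ℝ :=
  fun i => u i.val

/-- Irreducibility of a copositive matrix `A` with respect to a set `M` of matrices. -/
def IrreducibleWrtSet {n : ℕ} (A : Matrix (Fin n) (Fin n) ℝ)
    (M : Set (Matrix (Fin n) (Fin n) ℝ)) : Prop :=
  ¬ ∃ γ : ℝ, 0 < γ ∧ ∃ B ∈ M, B ≠ 0 ∧ Copositive (A - γ • B)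

/-- Irreducibility of a copositive matrix `A` with respect to a single matrix `M`. -/
def IrreducibleWrtMat {n : ℕ} (A M : Matrix (Fin n) (Fin n) ℝ) : Prop :=
  ¬ ∃ γ : ℝ, 0 < γ ∧ Copositive (A - γ • M)

/-- An extremal element of a cone `K` of vectors. -/
def IsExtremalIn {ι : Type*} (K : Set (ι → ℝ)) (u : ι → ℝ) : Prop :=
  u ∈ K ∧ u ≠ 0 ∧ ∀ v w, v ∈ K → w ∈ K → u = v + w →
    (∃ a : ℝ, 0 ≤ a ∧ v = a • u) ∧ (∃ b : ℝ, 0 ≤ b ∧ w = b • u)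

/-- The matrix with entries 1 at positions `(i,j)` and `(j,i)` and 0 elsewhere. -/
def Eij {n : ℕ} (i j : Fin n) : Matrix (Fin n) (Fin n) ℝ :=
  fun a b => if (a = i ∧ b = j) ∨ (a = j ∧ b = i) then 1 else 0

open Filter Topology

section Orthant

variable {ι : Type*}

def orthantFace (J : Finset ι) : Set (ι → ℝ) :=
  {x | (∀ i, 0 ≤ x i) ∧ ∀ i ∉ J, x i = 0}

lemma isClosed_orthantFace (J : Finset ι) : IsClosed (orthantFace J) := by
  simp only [orthantFace, Set.ofPred_and, Set.ofPred_forall]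
  exact (isClosed_iInter fun i => isClosed_le continuous_const (continuous_apply i)).inter
    (isClosed_iInter fun i => isClosed_iInter fun _ =>
      isClosed_eq (continuous_apply i) continuous_const)

lemma smul_mem_orthantFace {J : Finset ι} {x : ι → ℝ} (hx : x ∈ orthantFace J) {c : ℝ}
    (hc : 0 ≤ c) : c • x ∈ orthantFace J :=
  ⟨fun i => mul_nonneg hc (hx.1 i), fun i hi => by simp [hx.2 i hi]⟩

lemma exists_max_smul_le [Fintype ι] {u x : ι → ℝ} (hu : ∀ i, 0 ≤ u i) (hu0 : u ≠ 0)
    (hx : ∀ i, 0 ≤ x i) :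
    ∃ α, 0 ≤ α ∧ (∀ i, α * u i ≤ x i) ∧ ∃ i₀, u i₀ ≠ 0 ∧ x i₀ = α * u i₀ := by
  have hS : (Finset.univ.filter fun i => u i ≠ 0).Nonempty := by
    obtain ⟨i, hi⟩ := Function.ne_iff.mp hu0
    exact ⟨i, by simpa using hi⟩
  obtain ⟨i₀, hi₀, hmin⟩ := Finset.exists_min_image _ (fun i => x i / u i) hS
  have hi₀ : u i₀ ≠ 0 := by simpa using hi₀
  refine ⟨x i₀ / u i₀, div_nonneg (hx i₀) (hu i₀), fun i => ?_, i₀, hi₀, by field_simp⟩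
  by_cases hi : u i = 0
  · simpa [hi] using hx i
  · have hpos : 0 < u i := (hu i).lt_of_ne' hi
    exact (le_div_iff₀ hpos).mp (hmin i (by simpa using hi))

end Orthant

lemma IsCompact.exists_pos_mul_le {X : Type*} [TopologicalSpace X] {K : Set X}
    (hK : IsCompact K) {f g : X → ℝ} (hf : ContinuousOn f K) (hg : ContinuousOn g K)
    (hpos : ∀ x ∈ K, 0 < g x) : ∃ γ > 0, ∀ x ∈ K, γ * f x ≤ g x := by
  obtain ⟨C, hC⟩ := hK.exists_bound_of_continuousOn (hf.div hg fun x hx => (hpos x hx).ne')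
  refine ⟨(|C| + 1)⁻¹, by positivity, fun x hx => ?_⟩
  have hratio : f x / g x ≤ |C| + 1 :=
    (le_abs_self _).trans ((hC x hx).trans ((le_abs_self C).trans (le_add_of_nonneg_right
      zero_le_one)))
  rw [inv_mul_le_iff₀ (by positivity)]
  exact (div_le_iff₀ (hpos x hx)).mp hratio

section QuadraticForm

variable {ι : Type*} [Fintype ι] {A : Matrix ι ι ℝ}

lemma dotProduct_mulVec_smul_self (A : Matrix ι ι ℝ) (c : ℝ) (x : ι → ℝ) :
    (c • x) ⬝ᵥ A *ᵥ (c • x) = c ^ 2 * (x ⬝ᵥ A *ᵥ x) := by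
  rw [smul_dotProduct, mulVec_smul, dotProduct_smul, smul_eq_mul, smul_eq_mul]
  ring

lemma Matrix.IsSymm.dotProduct_mulVec_comm (hA : A.IsSymm) (x y : ι → ℝ) :
    x ⬝ᵥ A *ᵥ y = y ⬝ᵥ A *ᵥ x := by
  rw [dotProduct_mulVec, ← mulVec_transpose, hA.eq, dotProduct_comm]

lemma Matrix.IsSymm.dotProduct_mulVec_add_self (hA : A.IsSymm) (x y : ι → ℝ) :
    (x + y) ⬝ᵥ A *ᵥ (x + y) = x ⬝ᵥ A *ᵥ x + 2 * (x ⬝ᵥ A *ᵥ y) + y ⬝ᵥ A *ᵥ y := by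
  rw [mulVec_add, dotProduct_add, add_dotProduct, add_dotProduct, hA.dotProduct_mulVec_comm y x]
  ring

lemma dotProduct_sub_smul_mulVec_self (A B : Matrix ι ι ℝ) (γ : ℝ) (x : ι → ℝ) :
    x ⬝ᵥ (A - γ • B) *ᵥ x = x ⬝ᵥ A *ᵥ x - γ * (x ⬝ᵥ B *ᵥ x) := by
  rw [sub_mulVec, dotProduct_sub, smul_mulVec, dotProduct_smul, smul_eq_mul]

end QuadraticForm

lemma Submodule.exists_ne_zero_dotProduct_eq_zero_of_ne_top {K ι : Type*} [Field K] [Fintype ι] [DecidableEq ι]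
    {p : Submodule K (ι → K)} (hp : p ≠ ⊤) : ∃ v ≠ 0, ∀ x ∈ p, v ⬝ᵥ x = 0 := by
  obtain ⟨f, hf0, hpf⟩ := p.exists_le_ker_of_lt_top hp.lt_top
  have hf : ∀ x, (dotProductEquiv K ι).symm f ⬝ᵥ x = f x := fun x => by
    rw [← dotProductEquiv_apply_apply, LinearEquiv.apply_symm_apply]
  refine ⟨(dotProductEquiv K ι).symm f, by simpa using hf0, fun x hx => ?_⟩
  rw [hf]
  exact hpf hx

section Copositive

variable {n : ℕ} {A : Matrix (Fin n) (Fin n) ℝ} {u : Fin n → ℝ}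

lemma IsZeroOf.exists_isMinimalZeroOf_supp_subset (hu : IsZeroOf A u) :
    ∃ w, IsMinimalZeroOf A w ∧ Supp w ⊆ Supp u := by
  obtain ⟨w, ⟨hw, hwu⟩, hmin⟩ := (wellFounded_lt.onFun (f := Supp)).has_min
    {w | IsZeroOf A w ∧ Supp w ⊆ Supp u} ⟨u, hu, subset_rfl⟩
  exact ⟨w, ⟨hw, fun ⟨z, hz, hzw⟩ => hmin z ⟨hz, hzw.subset.trans hwu⟩ hzw⟩, hwu⟩

lemma Copositive.mulVec_nonneg (hA : Copositive A) (hu : IsZeroOf A u) (i : Fin n) :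
    0 ≤ (A *ᵥ u) i := by
  -- `u` minimizes the form on the orthant, so its derivative in the direction `eᵢ` is `≥ 0`.
  have h : ∀ t : ℝ, 0 < t → 0 ≤ t ^ 2 * A i i + 2 * (t * (A *ᵥ u) i) := by
    intro t ht
    have hx : ∀ j, 0 ≤ (t • Pi.single i 1 + u : Fin n → ℝ) j := fun j => by
      by_cases hj : j = i
      · subst hj; simpa using add_nonneg ht.le (hu.2.1 j)
      · simpa [hj] using hu.2.1 j
    have := hA.2 _ hx
    rwa [hA.1.dotProduct_mulVec_add_self, hu.2.2, dotProduct_mulVec_smul_self, smul_dotProduct,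
      mulVec_single_one, single_one_dotProduct, single_one_dotProduct, add_zero] at this
  by_contra! hneg
  have ht : 0 < -(A *ᵥ u) i / (|A i i| + 1) := div_pos (neg_pos.mpr hneg) (by positivity)
  have := h _ ht
  have hmul : -(A *ᵥ u) i / (|A i i| + 1) * (|A i i| + 1) = -(A *ᵥ u) i := by field_simp
  nlinarith [le_abs_self (A i i), mul_pos ht ht]

lemma Copositive.dotProduct_mulVec_le_add_smul (hA : Copositive A) (hu : IsZeroOf A u)
    {y : Fin n → ℝ} (hy : ∀ i, 0 ≤ y i) {α : ℝ} (hα : 0 ≤ α) :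
    y ⬝ᵥ A *ᵥ y ≤ (y + α • u) ⬝ᵥ A *ᵥ (y + α • u) := by
  have hyu : 0 ≤ y ⬝ᵥ A *ᵥ u :=
    Finset.sum_nonneg fun i _ => mul_nonneg (hy i) (hA.mulVec_nonneg hu i)
  rw [hA.1.dotProduct_mulVec_add_self, dotProduct_mulVec_smul_self, hu.2.2, mulVec_smul,
    dotProduct_smul, smul_eq_mul]
  nlinarith

lemma Copositive.exists_pos_mul_sq_le_of_forall_not_isZeroOf (hA : Copositive A)
    (v : Fin n → ℝ) {J : Finset (Fin n)} (hJ : ∀ x ∈ orthantFace J, ¬ IsZeroOf A x) :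
    ∃ γ > 0, ∀ x ∈ orthantFace J, γ * (v ⬝ᵥ x) ^ 2 ≤ x ⬝ᵥ A *ᵥ x := by
  have hK := (isCompact_sphere (0 : Fin n → ℝ) 1).inter_left (isClosed_orthantFace J)
  obtain ⟨γ, hγ, hbound⟩ := hK.exists_pos_mul_le (f := fun x => (v ⬝ᵥ x) ^ 2)
    (g := fun x => x ⬝ᵥ A *ᵥ x) (by fun_prop) (by fun_prop) fun x ⟨hxJ, hx1⟩ => by
      have hx0 : x ≠ 0 := ne_zero_of_mem_unit_sphere ⟨x, hx1⟩
      exact (hA.2 x hxJ.1).lt_of_ne fun h => hJ x hxJ ⟨hx0, hxJ.1, h.symm⟩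
  refine ⟨γ, hγ, fun x hx => ?_⟩
  rcases eq_or_ne x 0 with rfl | hx0
  · simp
  have hy := hbound (‖x‖⁻¹ • x) ⟨smul_mem_orthantFace hx (by positivity),
    by simp [norm_smul, norm_ne_zero_iff.mpr hx0]⟩
  have hxy : x = ‖x‖ • ‖x‖⁻¹ • x := by rw [smul_inv_smul₀ (norm_ne_zero_iff.mpr hx0)]
  rw [hxy, dotProduct_smul, smul_eq_mul, mul_pow, dotProduct_mulVec_smul_self]
  nlinarith [sq_nonneg ‖x‖]

lemma Copositive.eventually_mul_sq_le (hA : Copositive A) {v : Fin n → ℝ}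
    (hv : ∀ w, IsMinimalZeroOf A w → v ⬝ᵥ w = 0) (J : Finset (Fin n)) :
    ∀ᶠ γ in 𝓝[>] (0 : ℝ), ∀ x ∈ orthantFace J, γ * (v ⬝ᵥ x) ^ 2 ≤ x ⬝ᵥ A *ᵥ x := by
  induction J using Finset.strongInduction with
  | H J ih =>
  by_cases hJ : ∃ w ∈ orthantFace J, IsMinimalZeroOf A w
  · obtain ⟨w, hwJ, hw⟩ := hJ
    filter_upwards [(eventually_all_finset J).2 fun i hi => ih _ (Finset.erase_ssubset hi)]
      with γ hγ x hx
    obtain ⟨α, hα, hle, i₀, hi₀, hxi₀⟩ := exists_max_smul_le hw.1.2.1 hw.1.1 hx.1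
    have hi₀J : i₀ ∈ J := by_contra fun h => hi₀ (hwJ.2 i₀ h)
    have hy : x - α • w ∈ orthantFace (J.erase i₀) := by
      refine ⟨fun i => by simpa using hle i, fun i hi => ?_⟩
      rcases eq_or_ne i i₀ with rfl | hii₀
      · simp [hxi₀]
      · have hiJ : i ∉ J := fun h => hi (Finset.mem_erase.mpr ⟨hii₀, h⟩)
        simp [hx.2 i hiJ, hwJ.2 i hiJ]
    calc γ * (v ⬝ᵥ x) ^ 2 = γ * (v ⬝ᵥ (x - α • w)) ^ 2 := by
          rw [dotProduct_sub, dotProduct_smul, hv w hw, smul_zero, sub_zero]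
      _ ≤ (x - α • w) ⬝ᵥ A *ᵥ (x - α • w) := hγ i₀ hi₀J _ hy
      _ ≤ (x - α • w + α • w) ⬝ᵥ A *ᵥ (x - α • w + α • w) :=
          hA.dotProduct_mulVec_le_add_smul hw.1 hy.1 hα
      _ = x ⬝ᵥ A *ᵥ x := by rw [sub_add_cancel]
  · have hJ' : ∀ x ∈ orthantFace J, ¬ IsZeroOf A x := fun x hx hzero => by
      obtain ⟨w, hw, hwx⟩ := hzero.exists_isMinimalZeroOf_supp_subset
      refine hJ ⟨w, ⟨hw.1.2.1, fun i hi => ?_⟩, hw⟩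
      by_contra hwi
      exact hwx hwi (hx.2 i hi)
    obtain ⟨γ₀, hγ₀, h⟩ := hA.exists_pos_mul_sq_le_of_forall_not_isZeroOf v hJ'
    filter_upwards [Ioc_mem_nhdsGT hγ₀] with γ hγ x hx
    exact (mul_le_mul_of_nonneg_right hγ.2 (sq_nonneg _)).trans (h x hx)

lemma copositive_sub_smul_vecMulVec {γ : ℝ} {v : Fin n → ℝ} (hA : A.IsSymm)
    (h : ∀ x, (∀ i, 0 ≤ x i) → γ * (v ⬝ᵥ x) ^ 2 ≤ x ⬝ᵥ A *ᵥ x) :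
    Copositive (A - γ • vecMulVec v v) := by
  refine ⟨hA.sub (IsSymm.smul (transpose_vecMulVec v v) γ), fun x hx => ?_⟩
  rw [dotProduct_sub_smul_mulVec_self, vecMulVec_mulVec, dotProduct_smul]
  simpa [dotProduct_comm x v, sq] using h x hx

lemma Matrix.PosSemidef.mulVec_eq_zero_of_copositive_sub {B : Matrix (Fin n) (Fin n) ℝ}
    (hB : B.PosSemidef) {γ : ℝ} (hγ : 0 < γ) (hcop : Copositive (A - γ • B))
    (hu : IsZeroOf A u) : B *ᵥ u = 0 := by
  have h := hcop.2 u hu.2.1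
  rw [dotProduct_sub_smul_mulVec_self, hu.2.2] at h
  have hBu : 0 ≤ u ⬝ᵥ B *ᵥ u := hB.dotProduct_mulVec_nonneg u
  exact (hB.dotProduct_mulVec_zero_iff u).mp (by rw [star_trivial]; nlinarith)

end Copositive

theorem stmt17 {n : ℕ} (A : Matrix (Fin n) (Fin n) ℝ) (hA : Copositive A) :
    IrreducibleWrtSet A {B : Matrix (Fin n) (Fin n) ℝ | B.PosSemidef} ↔
      Submodule.span ℝ {u : Fin n → ℝ | IsMinimalZeroOf A u} = ⊤ := by
  constructor
  · intro hirr
    by_contra hspan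
    obtain ⟨v, hv0, hv⟩ := Submodule.exists_ne_zero_dotProduct_eq_zero_of_ne_top hspan
    obtain ⟨γ, hbound, hγ⟩ := ((hA.eventually_mul_sq_le (fun w hw => hv w
      (Submodule.subset_span hw)) Finset.univ).and self_mem_nhdsWithin).exists
    refine hirr ⟨γ, hγ, vecMulVec v v, posSemidef_vecMulVec_self_star v, by simpa using hv0,
      copositive_sub_smul_vecMulVec hA.1 fun x hx => hbound x ⟨hx, by simp⟩⟩
  · rintro hspan ⟨γ, hγ, B, hB, hB0, hcop⟩
    have hker : Submodule.span ℝ {u | IsMinimalZeroOf A u} ≤ LinearMap.ker B.mulVecLin :=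
      Submodule.span_le.mpr fun u hu => hB.mulVec_eq_zero_of_copositive_sub hγ hcop hu.1
    rw [hspan, top_le_iff, LinearMap.ker_eq_top] at hker
    exact hB0 (ext_iff_mulVec.mpr fun x => by simpa using LinearMap.congr_fun hker x)
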